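/- For all integers ℓ ≥ 1 and all k with 25 ≤ k ≤ ⌊3ℓ/2⌋ - 16, the coefficients of binom{ℓ+3}{3}_q satisfy p_{k+1}(ℓ,3) - p_k(ℓ,3) ≥ 5, with no exceptions. -/

import Mathlib

/-!
Multiplying by `1 - q` turns the differences `p_{k+1}(ℓ,3) - p_k(ℓ,3)` into the coefficients of
`(1 - q^(ℓ+1)) (1 - q^(ℓ+2)) (1 - q^(ℓ+3)) / ((1 - q^2) (1 - q^3))`. The series
`1 / ((1 - q^2) (1 - q^3))` has the explicit coefficients `g n = ⌊n/6⌋ + [n ≢ 1 mod 6]`, and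
below degree `2ℓ + 3` only the first four terms of the numerator contribute, so the difference is
`g (k+1) - g (k-ℓ) - g (k-ℓ-1) - g (k-ℓ-2)`, roughly `(3ℓ - 2k) / 6`. The bound
`k ≤ ⌊3ℓ/2⌋ - 16` leaves enough room for the rounding errors.
-/

/-- The coefficient of `q^k` in the Gaussian polynomial (q-binomial coefficient)
`binom{ℓ+m}{m}_q = ∏_{i=1}^m (1-q^(ℓ+i))/(1-q^i)`, computed in `ℚ⟦q⟧`. -/
noncomputable def gaussCoeff (ℓ m k : ℕ) : ℚ :=
  PowerSeries.coeff (R := ℚ) k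
    ((∏ i ∈ Finset.range m, (1 - (PowerSeries.X : PowerSeries ℚ) ^ (ℓ + i + 1))) *
     (∏ i ∈ Finset.range m, (1 - (PowerSeries.X : PowerSeries ℚ) ^ (i + 1)))⁻¹)

open PowerSeries

/-- `⌊n/6⌋ + [n ≢ 1 mod 6]` is the number of partitions of `n` into parts `2` and `3`. -/
def partitionsTwoThree (n : ℕ) : ℕ := n / 6 + if n % 6 = 1 then 0 else 1

theorem partitionsTwoThree_recurrence (n : ℕ) :
    (partitionsTwoThree n : ℤ) - (if 2 ≤ n then (partitionsTwoThree (n - 2) : ℤ) else 0)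
      - (if 3 ≤ n then (partitionsTwoThree (n - 3) : ℤ) else 0)
      + (if 5 ≤ n then (partitionsTwoThree (n - 5) : ℤ) else 0) = if n = 0 then 1 else 0 := by
  simp only [partitionsTwoThree]
  split_ifs <;> push_cast <;> omega

theorem mk_partitionsTwoThree_mul {R : Type*} [CommRing R] :
    (mk fun n => (partitionsTwoThree n : R)) * ((1 - X ^ 2) * (1 - X ^ 3)) = 1 := by
  have expand : ∀ G : R⟦X⟧,
      G * ((1 - X ^ 2) * (1 - X ^ 3)) = G - X ^ 2 * G - X ^ 3 * G + X ^ 5 * G := fun G => by ring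
  ext n
  rw [expand]
  simp only [map_add, map_sub, coeff_X_pow_mul', coeff_one, coeff_mk]
  have h := congrArg (Int.cast : ℤ → R) (partitionsTwoThree_recurrence n)
  push_cast at h
  split_ifs at h ⊢ <;> simpa using h

theorem one_sub_X_mul_inv_prod_range_three {K : Type*} [Field K] :
    (1 - X) * (∏ i ∈ Finset.range 3, (1 - X ^ (i + 1) : K⟦X⟧))⁻¹ =
      mk fun n => (partitionsTwoThree n : K) := by
  have hconst : constantCoeff (∏ i ∈ Finset.range 3, (1 - X ^ (i + 1) : K⟦X⟧)) ≠ 0 := by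
    simp [map_prod]
  rw [eq_comm, eq_mul_inv_iff_mul_eq hconst]
  simp only [Finset.prod_range_succ, Finset.prod_range_zero]
  linear_combination (1 - X) * (mk_partitionsTwoThree_mul (R := K))

theorem coeff_succ_one_sub_X_mul {R : Type*} [CommRing R] (F : R⟦X⟧) (k : ℕ) :
    coeff (k + 1) ((1 - X) * F) = coeff (k + 1) F - coeff k F := by
  rw [sub_mul, one_mul, map_sub, coeff_succ_X_mul]

theorem gaussCoeff_three_succ_sub (ℓ k : ℕ) :
    gaussCoeff ℓ 3 (k + 1) - gaussCoeff ℓ 3 k =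
      coeff (k + 1) ((1 - X ^ (ℓ + 1)) * (1 - X ^ (ℓ + 2)) * (1 - X ^ (ℓ + 3)) *
        mk fun n => (partitionsTwoThree n : ℚ)) := by
  rw [gaussCoeff, gaussCoeff, ← coeff_succ_one_sub_X_mul, mul_left_comm,
    one_sub_X_mul_inv_prod_range_three]
  simp only [Finset.prod_range_succ, Finset.prod_range_zero, one_mul]

theorem coeff_cubic_mul_mk_of_lt {R : Type*} [CommRing R] (f : ℕ → R) {ℓ n : ℕ}
    (hn : n < 2 * ℓ + 3) :
    coeff n ((1 - X ^ (ℓ + 1)) * (1 - X ^ (ℓ + 2)) * (1 - X ^ (ℓ + 3)) * mk f) =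
      f n - (if ℓ + 1 ≤ n then f (n - (ℓ + 1)) else 0)
        - (if ℓ + 2 ≤ n then f (n - (ℓ + 2)) else 0)
        - (if ℓ + 3 ≤ n then f (n - (ℓ + 3)) else 0) := by
  have expand : (1 - X ^ (ℓ + 1)) * (1 - X ^ (ℓ + 2)) * (1 - X ^ (ℓ + 3)) * mk f
      = mk f - X ^ (ℓ + 1) * mk f - X ^ (ℓ + 2) * mk f - X ^ (ℓ + 3) * mk f
        + X ^ (2 * ℓ + 3) * mk f + X ^ (2 * ℓ + 4) * mk f + X ^ (2 * ℓ + 5) * mk f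
        - X ^ (3 * ℓ + 6) * mk f := by ring
  rw [expand]
  simp only [map_add, map_sub, coeff_X_pow_mul', coeff_mk]
  rw [if_neg (show ¬2 * ℓ + 3 ≤ n by omega), if_neg (show ¬2 * ℓ + 4 ≤ n by omega),
    if_neg (show ¬2 * ℓ + 5 ≤ n by omega), if_neg (show ¬3 * ℓ + 6 ≤ n by omega)]
  ring

theorem five_le_partitionsTwoThree_sub {ℓ k : ℕ} (h1 : 25 ≤ k) (h2 : 2 * k + 32 ≤ 3 * ℓ) :
    5 ≤ (partitionsTwoThree (k + 1) : ℤ)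
      - (if ℓ + 1 ≤ k + 1 then (partitionsTwoThree (k + 1 - (ℓ + 1)) : ℤ) else 0)
      - (if ℓ + 2 ≤ k + 1 then (partitionsTwoThree (k + 1 - (ℓ + 2)) : ℤ) else 0)
      - (if ℓ + 3 ≤ k + 1 then (partitionsTwoThree (k + 1 - (ℓ + 3)) : ℤ) else 0) := by
  simp only [partitionsTwoThree]
  split_ifs <;> push_cast <;> omega

theorem five_strict_m3_general (ℓ : ℕ) (k : ℕ) (h1 : 25 ≤ k)
    (h2 : k ≤ 3 * ℓ / 2 - 16) :
    gaussCoeff ℓ 3 (k + 1) - gaussCoeff ℓ 3 k ≥ 5 := by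
  have hkℓ : 2 * k + 32 ≤ 3 * ℓ := by omega
  rw [gaussCoeff_three_succ_sub, coeff_cubic_mul_mk_of_lt _ (by omega)]
  have key := five_le_partitionsTwoThree_sub h1 hkℓ
  split_ifs at key ⊢ <;> exact_mod_cast key

theorem five_strict_m3 (ℓ : ℕ) (hℓ : 1 ≤ ℓ) (k : ℕ) (h1 : 25 ≤ k)
    (h2 : k ≤ 3 * ℓ / 2 - 16) :
    gaussCoeff ℓ 3 (k + 1) - gaussCoeff ℓ 3 k ≥ 5 :=
  five_strict_m3_general ℓ k h1 h2
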